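/- Let T be a locally satisfiable negative local theory, C a retractor of T, A a subset of C, and x a variable pointed over L(A). For tuples a, b ∈ C^x, one has ltp^C_+(a/A) = ltp^C_+(b/A) if and only if there is an automorphism σ of C fixing A pointwise with σ(a) = b. -/

import Mathlib

noncomputable section

structure LocalLanguage : Type 1 where
  Sorts : Type
  Rel : (n : ℕ) → (Fin n → Sorts) → Type
  Const : Sorts → Type
  Loc : Sorts → Type
  locToRel : {s : Sorts} → Loc s → Rel 2 ![s, s]
  dd0 : (s : Sorts) → Loc s
  locMul : {s : Sorts} → Loc s → Loc s → Loc s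
  locLe : {s : Sorts} → Loc s → Loc s → Prop
  locMul_assoc : ∀ {s} (d₁ d₂ d₃ : Loc s), locMul (locMul d₁ d₂) d₃ = locMul d₁ (locMul d₂ d₃)
  dd0_locMul : ∀ {s} (d : Loc s), locMul (dd0 s) d = d
  locMul_dd0 : ∀ {s} (d : Loc s), locMul d (dd0 s) = d
  locLe_refl : ∀ {s} (d : Loc s), locLe d d
  locLe_trans : ∀ {s} (d₁ d₂ d₃ : Loc s), locLe d₁ d₂ → locLe d₂ d₃ → locLe d₁ d₃
  locLe_antisymm : ∀ {s} (d₁ d₂ : Loc s), locLe d₁ d₂ → locLe d₂ d₁ → d₁ = d₂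
  dd0_locLe : ∀ {s} (d : Loc s), locLe (dd0 s) d
  locMul_mono : ∀ {s} (d₁ d₂ e₁ e₂ : Loc s), locLe d₁ e₁ → locLe d₂ e₂ →
    locLe (locMul d₁ d₂) (locMul e₁ e₂)
  bound : {s : Sorts} → Const s → Const s → Loc s

structure LStructure (L : LocalLanguage) : Type 1 where
  Dom : L.Sorts → Type
  relMap : {n : ℕ} → {ρ : Fin n → L.Sorts} → L.Rel n ρ → ((i : Fin n) → Dom (ρ i)) → Prop
  constMap : {s : L.Sorts} → L.Const s → Dom s

def dpair {C : Fin 2 → Sort*} (a : C 0) (b : C 1) : (i : Fin 2) → C i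
  | ⟨0, _⟩ => a
  | ⟨1, _⟩ => b

def LStructure.locRel {L : LocalLanguage} (M : LStructure L) {s : L.Sorts}
    (d : L.Loc s) (a b : M.Dom s) : Prop :=
  M.relMap (L.locToRel d) (dpair a b)

structure IsLocal {L : LocalLanguage} (M : LStructure L) : Prop where
  symm : ∀ {s : L.Sorts} (d : L.Loc s) (a b : M.Dom s), M.locRel d a b → M.locRel d b a
  mono : ∀ {s : L.Sorts} (d₁ d₂ : L.Loc s), L.locLe d₁ d₂ →
    ∀ (a b : M.Dom s), M.locRel d₁ a b → M.locRel d₂ a b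
  comp : ∀ {s : L.Sorts} (d₁ d₂ : L.Loc s) (a b c : M.Dom s),
    M.locRel d₁ a b → M.locRel d₂ b c → M.locRel (L.locMul d₁ d₂) a c
  boundAx : ∀ {s : L.Sorts} (c₁ c₂ : L.Const s),
    M.locRel (L.bound c₁ c₂) (M.constMap c₁) (M.constMap c₂)
  total : ∀ {s : L.Sorts} (a b : M.Dom s), ∃ d : L.Loc s, M.locRel d a b
  dd0_eq : ∀ {s : L.Sorts} (a b : M.Dom s), M.locRel (L.dd0 s) a b ↔ a = b

/-! ## Syntax -/

/-- Terms: variables or constants (the language is relational). -/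
inductive LTerm (L : LocalLanguage) (α : Type) (σ : α → L.Sorts) : L.Sorts → Type
  | var (a : α) : LTerm L α σ (σ a)
  | const {s : L.Sorts} (c : L.Const s) : LTerm L α σ s

/-- Sort assignment for a context extended by one variable of sort `s`. -/
abbrev osort {L : LocalLanguage} {α : Type} (s : L.Sorts) (σ : α → L.Sorts) :
    Option α → L.Sorts :=
  fun o => Option.elim o s σ

/-- Positive formulas: atomic, conjunction, disjunction, existential quantification. -/
inductive PosForm (L : LocalLanguage) : (α : Type) → (α → L.Sorts) → Type 1
  | rel {α : Type} {σ : α → L.Sorts} {n : ℕ} {ρ : Fin n → L.Sorts}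
      (R : L.Rel n ρ) (ts : (i : Fin n) → LTerm L α σ (ρ i)) : PosForm L α σ
  | and {α : Type} {σ : α → L.Sorts} (φ ψ : PosForm L α σ) : PosForm L α σ
  | or {α : Type} {σ : α → L.Sorts} (φ ψ : PosForm L α σ) : PosForm L α σ
  | ex {α : Type} {σ : α → L.Sorts} (s : L.Sorts)
      (φ : PosForm L (Option α) (osort s σ)) : PosForm L α σ

/-- Local positive formulas: atomic, conjunction, disjunction, local existential
quantification `∃ x ∈ d(t) φ`. -/
inductive LPosForm (L : LocalLanguage) : (α : Type) → (α → L.Sorts) → Type 1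
  | rel {α : Type} {σ : α → L.Sorts} {n : ℕ} {ρ : Fin n → L.Sorts}
      (R : L.Rel n ρ) (ts : (i : Fin n) → LTerm L α σ (ρ i)) : LPosForm L α σ
  | and {α : Type} {σ : α → L.Sorts} (φ ψ : LPosForm L α σ) : LPosForm L α σ
  | or {α : Type} {σ : α → L.Sorts} (φ ψ : LPosForm L α σ) : LPosForm L α σ
  | lex {α : Type} {σ : α → L.Sorts} (s : L.Sorts) (d : L.Loc s) (t : LTerm L α σ s)
      (φ : LPosForm L (Option α) (osort s σ)) : LPosForm L α σ

/-- Local formulas: atomic, negation, conjunction, local existential quantification. -/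
inductive LForm (L : LocalLanguage) : (α : Type) → (α → L.Sorts) → Type 1
  | rel {α : Type} {σ : α → L.Sorts} {n : ℕ} {ρ : Fin n → L.Sorts}
      (R : L.Rel n ρ) (ts : (i : Fin n) → LTerm L α σ (ρ i)) : LForm L α σ
  | not {α : Type} {σ : α → L.Sorts} (φ : LForm L α σ) : LForm L α σ
  | and {α : Type} {σ : α → L.Sorts} (φ ψ : LForm L α σ) : LForm L α σ
  | lex {α : Type} {σ : α → L.Sorts} (s : L.Sorts) (d : L.Loc s) (t : LTerm L α σ s)
      (φ : LForm L (Option α) (osort s σ)) : LForm L α σ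

/-! ## Semantics -/

def LTerm.realize {L : LocalLanguage} (M : LStructure L) {α : Type} {σ : α → L.Sorts}
    (v : (a : α) → M.Dom (σ a)) : {s : L.Sorts} → LTerm L α σ s → M.Dom s
  | _, .var a => v a
  | _, .const c => M.constMap c

/-- Extension of a valuation by a value for the new variable. -/
def vcons {L : LocalLanguage} {M : LStructure L} {α : Type} {σ : α → L.Sorts} {s : L.Sorts}
    (x : M.Dom s) (v : (a : α) → M.Dom (σ a)) : (o : Option α) → M.Dom (osort s σ o)
  | none => x
  | some a => v a

def PosForm.Realize {L : LocalLanguage} (M : LStructure L) :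
    {α : Type} → {σ : α → L.Sorts} → PosForm L α σ → ((a : α) → M.Dom (σ a)) → Prop
  | _, _, .rel R ts, v => M.relMap R (fun i => (ts i).realize M v)
  | _, _, .and φ ψ, v => φ.Realize M v ∧ ψ.Realize M v
  | _, _, .or φ ψ, v => φ.Realize M v ∨ ψ.Realize M v
  | _, _, .ex s φ, v => ∃ x : M.Dom s, φ.Realize M (vcons x v)

def LPosForm.Realize {L : LocalLanguage} (M : LStructure L) :
    {α : Type} → {σ : α → L.Sorts} → LPosForm L α σ → ((a : α) → M.Dom (σ a)) → Prop
  | _, _, .rel R ts, v => M.relMap R (fun i => (ts i).realize M v)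
  | _, _, .and φ ψ, v => φ.Realize M v ∧ ψ.Realize M v
  | _, _, .or φ ψ, v => φ.Realize M v ∨ ψ.Realize M v
  | _, _, .lex s d t φ, v =>
      ∃ x : M.Dom s, M.locRel d x (t.realize M v) ∧ φ.Realize M (vcons x v)

def LForm.Realize {L : LocalLanguage} (M : LStructure L) :
    {α : Type} → {σ : α → L.Sorts} → LForm L α σ → ((a : α) → M.Dom (σ a)) → Prop
  | _, _, .rel R ts, v => M.relMap R (fun i => (ts i).realize M v)
  | _, _, .not φ, v => ¬ φ.Realize M v
  | _, _, .and φ ψ, v => φ.Realize M v ∧ ψ.Realize M v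
  | _, _, .lex s d t φ, v =>
      ∃ x : M.Dom s, M.locRel d x (t.realize M v) ∧ φ.Realize M (vcons x v)

/-- Quantifier-free positive formulas. -/
inductive PosForm.IsQF {L : LocalLanguage} : {α : Type} → {σ : α → L.Sorts} → PosForm L α σ → Prop
  | rel {α : Type} {σ : α → L.Sorts} {n : ℕ} {ρ : Fin n → L.Sorts}
      (R : L.Rel n ρ) (ts : (i : Fin n) → LTerm L α σ (ρ i)) : PosForm.IsQF (.rel R ts)
  | and {α : Type} {σ : α → L.Sorts} {φ ψ : PosForm L α σ} :
      PosForm.IsQF φ → PosForm.IsQF ψ → PosForm.IsQF (.and φ ψ)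
  | or {α : Type} {σ : α → L.Sorts} {φ ψ : PosForm L α σ} :
      PosForm.IsQF φ → PosForm.IsQF ψ → PosForm.IsQF (.or φ ψ)


/-! ## Sentences, theories, models -/

/-- Sort assignment for the empty context. -/
abbrev emptySorts (L : LocalLanguage) : Empty → L.Sorts := fun e => e.elim

/-- Positive sentences. -/
abbrev PosSentence (L : LocalLanguage) := PosForm L Empty (emptySorts L)

/-- A positive sentence holds in a structure. -/
def PosSentence.RealizedIn {L : LocalLanguage} (φ : PosSentence L) (M : LStructure L) : Prop :=
  φ.Realize M (fun e => e.elim)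

/-- We represent a negative theory by the set of positive sentences whose negations
belong to it.  `M` is a local model of `T` if `M` is local and satisfies the negation of
every positive sentence in `T`. -/
def LocalModel {L : LocalLanguage} (M : LStructure L) (T : Set (PosSentence L)) : Prop :=
  IsLocal M ∧ ∀ φ ∈ T, ¬ φ.RealizedIn M

/-- `T` (a set of positive sentences standing for the negative theory `{¬φ : φ ∈ T}`)
is a negative local theory if it is closed under local implication: any negative sentence
true in every local model of `T` is already in `T`. -/
def IsNegLocalTheory {L : LocalLanguage} (T : Set (PosSentence L)) : Prop :=
  ∀ φ : PosSentence L, (∀ M : LStructure L, LocalModel M T → ¬ φ.RealizedIn M) → φ ∈ T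

/-- `T` is locally satisfiable: it has a local model. -/
def LocSat {L : LocalLanguage} (T : Set (PosSentence L)) : Prop :=
  ∃ M : LStructure L, LocalModel M T

/-- The negative theory of a structure (as the set of positive sentences failing in it). -/
def ThNeg {L : LocalLanguage} (M : LStructure L) : Set (PosSentence L) :=
  {φ | ¬ φ.RealizedIn M}

/-! ## Homomorphisms -/

structure LHom {L : LocalLanguage} (M N : LStructure L) where
  toFun : (s : L.Sorts) → M.Dom s → N.Dom s
  map_rel : ∀ {n : ℕ} {ρ : Fin n → L.Sorts} (R : L.Rel n ρ) (x : (i : Fin n) → M.Dom (ρ i)),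
    M.relMap R x → N.relMap R (fun i => toFun (ρ i) (x i))
  map_const : ∀ {s : L.Sorts} (c : L.Const s), toFun s (M.constMap c) = N.constMap c

def LHom.comp {L : LocalLanguage} {M N P : LStructure L} (g : LHom N P) (f : LHom M N) :
    LHom M P where
  toFun s := g.toFun s ∘ f.toFun s
  map_rel R x h := g.map_rel R _ (f.map_rel R x h)
  map_const c := by
    simp only [Function.comp_apply, f.map_const, g.map_const]

def LHom.id {L : LocalLanguage} (M : LStructure L) : LHom M M where
  toFun _ := fun x => x
  map_rel _ _ h := h
  map_const _ := rfl

/-- A homomorphism is a positive embedding if it reflects all positive formulas. -/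
def LHom.IsPosEmbedding {L : LocalLanguage} {M N : LStructure L} (h : LHom M N) : Prop :=
  ∀ (α : Type) (σ : α → L.Sorts) (φ : PosForm L α σ) (v : (a : α) → M.Dom (σ a)),
    φ.Realize N (fun a => h.toFun (σ a) (v a)) → φ.Realize M v

/-- A local positively closed model of `T`. -/
def IsPC {L : LocalLanguage} (M : LStructure L) (T : Set (PosSentence L)) : Prop :=
  LocalModel M T ∧
    ∀ (N : LStructure L) (h : LHom M N), LocalModel N T → h.IsPosEmbedding

/-- An endomorphism is an automorphism if it has a two-sided inverse homomorphism. -/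
def LHom.IsAuto {L : LocalLanguage} {M : LStructure L} (f : LHom M M) : Prop :=
  ∃ g : LHom M M, g.comp f = LHom.id M ∧ f.comp g = LHom.id M

/-- Isomorphism of structures. -/
def Isomorphic {L : LocalLanguage} (M N : LStructure L) : Prop :=
  ∃ (f : LHom M N) (g : LHom N M), g.comp f = LHom.id M ∧ f.comp g = LHom.id N

/-! ## Types -/

/-- The local positive type of a tuple. -/
def ltp {L : LocalLanguage} (M : LStructure L) {α : Type} {σ : α → L.Sorts}
    (v : (a : α) → M.Dom (σ a)) : Set (LPosForm L α σ) :=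
  {φ | φ.Realize M v}

/-- The positive type of a tuple. -/
def ptp {L : LocalLanguage} (M : LStructure L) {α : Type} {σ : α → L.Sorts}
    (v : (a : α) → M.Dom (σ a)) : Set (PosForm L α σ) :=
  {φ | φ.Realize M v}

/-- A partial local positive type of `T` on `(α, σ)`: a set of local positive formulas
realized by some tuple in some local model of `T`. -/
def IsPartialLType {L : LocalLanguage} (T : Set (PosSentence L)) {α : Type}
    {σ : α → L.Sorts} (Γ : Set (LPosForm L α σ)) : Prop :=
  ∃ (M : LStructure L) (v : (a : α) → M.Dom (σ a)),
    LocalModel M T ∧ ∀ φ ∈ Γ, LPosForm.Realize M φ v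

/-- A local positive type: a maximal partial local positive type. -/
def IsLType {L : LocalLanguage} (T : Set (PosSentence L)) {α : Type}
    {σ : α → L.Sorts} (Γ : Set (LPosForm L α σ)) : Prop :=
  IsPartialLType T Γ ∧ ∀ Γ' : Set (LPosForm L α σ), IsPartialLType T Γ' → Γ ⊆ Γ' → Γ' = Γ

/-- A variable `(α, σ)` is pointed if every sort not occurring among its sorts carries a
constant symbol. -/
def VPointed {L : LocalLanguage} {α : Type} (σ : α → L.Sorts) : Prop :=
  ∀ s : L.Sorts, s ∉ Set.range σ → Nonempty (L.Const s)


/-! ## Bounds and bounded satisfiability -/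

/-- Pair of terms as arguments for a binary relation symbol. -/
def tpair {L : LocalLanguage} {α : Type} {σ : α → L.Sorts} {s t : L.Sorts}
    (t₁ : LTerm L α σ s) (t₂ : LTerm L α σ t) : (i : Fin 2) → LTerm L α σ (![s, t] i) :=
  dpair t₁ t₂

/-- A bound of the variable `(α, σ)`: a choice, for every single variable whose sort
carries a constant symbol, of a locality relation and a constant, and for every pair of
single variables of the same sort, of a locality relation. -/
structure VBound (L : LocalLanguage) (α : Type) (σ : α → L.Sorts) where
  dConst : (a : α) → Nonempty (L.Const (σ a)) → L.Loc (σ a)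
  cConst : (a : α) → Nonempty (L.Const (σ a)) → L.Const (σ a)
  dPair : (a b : α) → σ a = σ b → L.Loc (σ a)

/-- The set of (atomic, quantifier-free) local positive formulas making up a bound:
`d_a(x_a, c_a)` and `d_{a,b}(x_a, x_b)`. -/
def VBound.toSet {L : LocalLanguage} {α : Type} {σ : α → L.Sorts} (B : VBound L α σ) :
    Set (LPosForm L α σ) :=
  {φ | (∃ (a : α) (h : Nonempty (L.Const (σ a))),
          φ = LPosForm.rel (L.locToRel (B.dConst a h))
                (tpair (LTerm.var a) (LTerm.const (B.cConst a h)))) ∨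
       (∃ (a b : α) (e : σ a = σ b),
          φ = LPosForm.rel (L.locToRel (B.dPair a b e))
                (tpair (LTerm.var a) (e.symm ▸ LTerm.var b)))}

/-- A bound holds of a tuple if all its formulas do. -/
def VBound.Holds {L : LocalLanguage} {α : Type} {σ : α → L.Sorts} (B : VBound L α σ)
    (M : LStructure L) (v : (a : α) → M.Dom (σ a)) : Prop :=
  ∀ ψ ∈ B.toSet, LPosForm.Realize M ψ v

/-- Finite local satisfiability of a set of local positive formulas in `T`. -/
def FinLocSat {L : LocalLanguage} (T : Set (PosSentence L)) {α : Type} {σ : α → L.Sorts}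
    (Δ : Set (LPosForm L α σ)) : Prop :=
  ∀ Δ₀ ⊆ Δ, Δ₀.Finite →
    ∃ (M : LStructure L) (v : (a : α) → M.Dom (σ a)),
      LocalModel M T ∧ ∀ φ ∈ Δ₀, LPosForm.Realize M φ v

/-- Bounded satisfiability: for some bound `B`, `Γ ∪ B` is finitely locally satisfiable. -/
def BoundedlySat {L : LocalLanguage} (T : Set (PosSentence L)) {α : Type}
    {σ : α → L.Sorts} (Γ : Set (LPosForm L α σ)) : Prop :=
  ∃ B : VBound L α σ, FinLocSat T (Γ ∪ B.toSet)

/-! ## Π₁-local formulas -/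

/-- Dependent `Sum.elim` of valuations. -/
def sval {L : LocalLanguage} {M : LStructure L} {α β : Type} {σ : α → L.Sorts}
    {τ : β → L.Sorts} (v : (a : α) → M.Dom (σ a)) (w : (b : β) → M.Dom (τ b)) :
    (x : α ⊕ β) → M.Dom (Sum.elim σ τ x)
  | .inl a => v a
  | .inr b => w b

/-- A Π₁-local formula: a universally quantified local formula. -/
structure Pi1LForm (L : LocalLanguage) (α : Type) (σ : α → L.Sorts) : Type 1 where
  n : ℕ
  τ : Fin n → L.Sorts
  matrix : LForm L (α ⊕ Fin n) (Sum.elim σ τ)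

def Pi1LForm.Realize {L : LocalLanguage} {α : Type} {σ : α → L.Sorts}
    (φ : Pi1LForm L α σ) (M : LStructure L) (v : (a : α) → M.Dom (σ a)) : Prop :=
  ∀ w : (i : Fin φ.n) → M.Dom (φ.τ i), φ.matrix.Realize M (sval v w)

/-- Bounded satisfiability of a set of Π₁-local formulas: for some bound `B`, every
finite subset of `Γ` together with every finite part of `B` is realized in a local
model of `T`. -/
def Pi1BoundedlySat {L : LocalLanguage} (T : Set (PosSentence L)) {α : Type}
    {σ : α → L.Sorts} (Γ : Set (Pi1LForm L α σ)) : Prop :=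
  ∃ B : VBound L α σ,
    ∀ Γ₀ ⊆ Γ, Γ₀.Finite → ∀ F ⊆ B.toSet, F.Finite →
      ∃ (M : LStructure L) (v : (a : α) → M.Dom (σ a)),
        LocalModel M T ∧ (∀ φ ∈ Γ₀, Pi1LForm.Realize φ M v) ∧
          (∀ ψ ∈ F, LPosForm.Realize M ψ v)

/-! ## Cardinality, homogeneity, retractors -/

/-- The cardinality of a structure: that of the disjoint union of its sorts. -/
def LStructure.card {L : LocalLanguage} (M : LStructure L) : Cardinal :=
  Cardinal.mk (Σ s : L.Sorts, M.Dom s)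

/-- The cardinality of a local language. -/
def LocalLanguage.card (L : LocalLanguage) : Cardinal :=
  max Cardinal.aleph0
    (Cardinal.mk (L.Sorts ⊕ (Σ s : L.Sorts, L.Const s) ⊕ (Σ s : L.Sorts, L.Loc s) ⊕
      (Σ (n : ℕ) (ρ : Fin n → L.Sorts), L.Rel n ρ)))

/-- `M` is a (local positively) κ-ultrahomogeneous model of `T`. -/
def IsUltrahomogeneous {L : LocalLanguage} (T : Set (PosSentence L)) (M : LStructure L)
    (κ : Cardinal) : Prop :=
  ∀ A B : LStructure L, LocalModel A T → LocalModel B T → A.card < κ → B.card < κ →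
    ∀ f : LHom A M, f.IsPosEmbedding → ∀ g : LHom A B, ∃ h : LHom B M, h.comp g = f

/-- A retractor of `T`: a local model of `T` such that every homomorphism into a local
model of `T` has a retraction. -/
def IsRetractor {L : LocalLanguage} (T : Set (PosSentence L)) (C : LStructure L) : Prop :=
  LocalModel C T ∧
    ∀ N : LStructure L, LocalModel N T →
      ∀ f : LHom C N, ∃ g : LHom N C, g.comp f = LHom.id C

/-- `M` is κ-universal for a class `K` of structures. -/
def IsUniversal {L : LocalLanguage} (M : LStructure L) (K : LStructure L → Prop)
    (κ : Cardinal) : Prop :=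
  ∀ N : LStructure L, K N → N.card < κ → Nonempty (LHom N M)

/-- `M` is absolutely universal for a class `K` of structures. -/
def IsAbsUniversal {L : LocalLanguage} (M : LStructure L) (K : LStructure L → Prop) : Prop :=
  ∀ N : LStructure L, K N → Nonempty (LHom N M)

/-- Compatibility of two local models of `T`. -/
def Compat {L : LocalLanguage} (T : Set (PosSentence L)) (A B : LStructure L) : Prop :=
  ∃ M : LStructure L, LocalModel M T ∧ Nonempty (LHom A M) ∧ Nonempty (LHom B M)

/-- The local joint (homomorphism) property. -/
def HasLJP {L : LocalLanguage} (T : Set (PosSentence L)) : Prop :=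
  ∀ A B : LStructure L, LocalModel A T → LocalModel B T →
    ∃ M : LStructure L, LocalModel M T ∧ Nonempty (LHom A M) ∧ Nonempty (LHom B M)


/-! ## Parameters -/

/-- A set of parameters in a structure. -/
def ParamSet {L : LocalLanguage} (M : LStructure L) := (s : L.Sorts) → Set (M.Dom s)

/-- Interpretation in `M` of old and new constants of the expanded language. -/
def paramInterp {L : LocalLanguage} (M : LStructure L) (A : ParamSet M) {s : L.Sorts} :
    L.Const s ⊕ (A s) → M.Dom s
  | .inl c => M.constMap c
  | .inr a => a.1

/-- The expansion `L(A)` of `L` by new constants for the parameters `A` of a local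
structure `M`; bounds for pairs involving the new constants are chosen (by locality
axiom (A5)) so that they hold in `M`. -/
noncomputable def LocalLanguage.withParams (L : LocalLanguage) (M : LStructure L)
    (hM : IsLocal M) (A : ParamSet M) : LocalLanguage where
  Sorts := L.Sorts
  Rel := L.Rel
  Const s := L.Const s ⊕ (A s)
  Loc := L.Loc
  locToRel := L.locToRel
  dd0 := L.dd0
  locMul := L.locMul
  locLe := L.locLe
  locMul_assoc := L.locMul_assoc
  dd0_locMul := L.dd0_locMul
  locMul_dd0 := L.locMul_dd0
  locLe_refl := L.locLe_refl
  locLe_trans := L.locLe_trans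
  locLe_antisymm := L.locLe_antisymm
  dd0_locLe := L.dd0_locLe
  locMul_mono := L.locMul_mono
  bound := fun {_s} c₁ c₂ =>
    match c₁, c₂ with
    | .inl c₁, .inl c₂ => L.bound c₁ c₂
    | c₁, c₂ => Classical.choose (hM.total (paramInterp M A c₁) (paramInterp M A c₂))

/-- The natural expansion `M_A` of `M` to an `L(A)`-structure. -/
noncomputable def LStructure.withParams {L : LocalLanguage} (M : LStructure L)
    (hM : IsLocal M) (A : ParamSet M) : LStructure (L.withParams M hM A) where
  Dom := M.Dom
  relMap := M.relMap
  constMap := paramInterp M A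

/-- `M` has the local joint property over `A`: any two local models of `Th₋(M/A)` map
into a common local model of `Th₋(M/A)`. -/
def HasLJPOver {L : LocalLanguage} (M : LStructure L) (hM : IsLocal M) (A : ParamSet M) :
    Prop :=
  HasLJP (ThNeg (M.withParams hM A))

/-- `M` is (local positively) κ-saturated: it realizes every local positive type of
`Th₋(M/A)` on `x` whenever `|x| < κ`, `|A| < κ` and `M` has the local joint property
over `A`. -/
def IsSaturatedAt {L : LocalLanguage} (M : LStructure L) (hM : IsLocal M)
    (κ : Cardinal) : Prop :=
  ∀ A : ParamSet M, Cardinal.mk (Σ s : L.Sorts, A s) < κ → HasLJPOver M hM A →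
    ∀ (α : Type) (σ : α → L.Sorts), Cardinal.mk α < κ →
      ∀ Γ : Set (LPosForm (L.withParams M hM A) α σ),
        IsLType (ThNeg (M.withParams hM A)) Γ →
          ∃ v : (a : α) → M.Dom (σ a), ∀ φ ∈ Γ, LPosForm.Realize (M.withParams hM A) φ v

/-- The local positive type of a tuple over a set of parameters `A`, rendered as the set
of local positive formulas with extra free variables for the parameters of `A` that are
satisfied when those variables are evaluated at the parameters themselves. -/
def ltpOver {L : LocalLanguage} (M : LStructure L) (A : ParamSet M) {α : Type}
    {σ : α → L.Sorts} (v : (a : α) → M.Dom (σ a)) :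
    Set (LPosForm L (α ⊕ Σ s : L.Sorts, A s) (Sum.elim σ (fun p => p.1))) :=
  {φ | φ.Realize M (sval v (fun p => p.2.1))}

/-! ## Substructures -/

/-- A substructure of `M`: a family of subsets closed under the constants (the language
is relational). -/
structure Substruct {L : LocalLanguage} (M : LStructure L) where
  carrier : (s : L.Sorts) → Set (M.Dom s)
  const_mem : ∀ {s : L.Sorts} (c : L.Const s), M.constMap c ∈ carrier s

/-- The induced structure on a substructure. -/
def Substruct.toStruct {L : LocalLanguage} {M : LStructure L} (A : Substruct M) :
    LStructure L where
  Dom s := A.carrier s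
  relMap R x := M.relMap R (fun i => (x i).1)
  constMap c := ⟨M.constMap c, A.const_mem c⟩


/-! ## Topologies -/

/-- The `d`-ball at `a`. -/
def LStructure.ball {L : LocalLanguage} (M : LStructure L) {s : L.Sorts} (d : L.Loc s)
    (a : M.Dom s) : Set (M.Dom s) :=
  {b | M.locRel d a b}

/-- The local positive logic topology on a single sort of `M`: closed sets are the
subsets defined by sets of local positive formulas with parameters in `M` (parameters
being rendered as extra free variables evaluated at themselves). -/
def lpTopologyS {L : LocalLanguage} (M : LStructure L) (s : L.Sorts) :
    TopologicalSpace (M.Dom s) :=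
  TopologicalSpace.generateFrom
    {U | ∃ φ : LPosForm L (Unit ⊕ Σ s' : L.Sorts, M.Dom s')
            (Sum.elim (fun _ => s) (fun p => p.1)),
      U = {x | ¬ LPosForm.Realize M φ (sval (fun _ => x) (fun p => p.2))}}

/-- The space of local positive types of `T` on the variable `(α, σ)`. -/
def LTypeSpace (L : LocalLanguage) (T : Set (PosSentence L)) (α : Type)
    (σ : α → L.Sorts) :=
  {Γ : Set (LPosForm L α σ) // IsLType T Γ}

/-- The local positive logic topology on the space of local positive types: generated by
declaring `⟨φ⟩ = {p : φ ∈ p}` closed for every local positive formula `φ`; its closed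
sets are then exactly the sets `⟨Γ⟩` together with `∅`. -/
instance {L : LocalLanguage} (T : Set (PosSentence L)) (α : Type) (σ : α → L.Sorts) :
    TopologicalSpace (LTypeSpace L T α σ) :=
  TopologicalSpace.generateFrom
    {U | ∃ φ : LPosForm L α σ, U = {p : LTypeSpace L T α σ | φ ∉ p.1}}

/-! ## Completeness and compactness -/

/-- `T` is complete: `T = Th₋(M)` for every local positively closed model `M` of `T`. -/
def IsCompleteTheory {L : LocalLanguage} (T : Set (PosSentence L)) : Prop :=
  ∀ M : LStructure L, IsPC M T → ThNeg M = T

/-- `T` is local positively compact. -/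
def IsLocPosCompact {L : LocalLanguage} (T : Set (PosSentence L)) : Prop :=
  ∀ (s : L.Sorts) (γ : Type), Finite γ →
    ∀ (τ : γ → L.Sorts) (φ : LPosForm L (Fin 2 ⊕ γ) (Sum.elim (fun _ => s) τ)),
      (∀ M : LStructure L, LocalModel M T →
        ∀ (a : M.Dom s) (w : (j : γ) → M.Dom (τ j)),
          ¬ LPosForm.Realize M φ (sval ![a, a] w)) →
      ∀ (B : VBound L (Unit ⊕ γ) (Sum.elim (fun _ => s) τ)) (d : L.Loc s),
        ∃ k : ℕ, 0 < k ∧ ∀ M : LStructure L, LocalModel M T →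
          ¬ ∃ (a : Fin k → M.Dom s) (w : (j : γ) → M.Dom (τ j)),
            ∀ i j : Fin k, i ≠ j →
              B.Holds M (sval (fun _ => a i) w) ∧ M.locRel d (a i) (a j) ∧
                LPosForm.Realize M φ (sval ![a i, a j] w)

section Helpers

variable {L : LocalLanguage}

lemma dpair_zero {C : Fin 2 → Sort*} (a : C 0) (b : C 1) : dpair a b 0 = a := rfl
lemma dpair_one {C : Fin 2 → Sort*} (a : C 0) (b : C 1) : dpair a b 1 = b := rfl

lemma fin2_cases (i : Fin 2) : i = 0 ∨ i = 1 := by omega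

lemma LHom.ext' {M N : LStructure L} {f g : LHom M N} (h : f.toFun = g.toFun) : f = g := by
  cases f; cases g; cases h; rfl

lemma LHom.comp_toFun {M N P : LStructure L} (g : LHom N P) (f : LHom M N) (s : L.Sorts)
    (x : M.Dom s) : (g.comp f).toFun s x = g.toFun s (f.toFun s x) := rfl

/-- Homomorphisms commute with term realization. -/
lemma LHom.term_realize {M N : LStructure L} (f : LHom M N) {α : Type} {σ : α → L.Sorts}
    (v : (x : α) → M.Dom (σ x)) {s : L.Sorts} (t : LTerm L α σ s) :
    t.realize N (fun x => f.toFun (σ x) (v x)) = f.toFun s (t.realize M v) := by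
  cases t with
  | var a => rfl
  | const c => exact (f.map_const c).symm

lemma LHom.map_locRel {M N : LStructure L} (f : LHom M N) {s : L.Sorts} (d : L.Loc s)
    {x y : M.Dom s} (h : M.locRel d x y) :
    N.locRel d (f.toFun s x) (f.toFun s y) := by
  have h2 := f.map_rel (L.locToRel d) (dpair x y) h
  have heq : (fun i => f.toFun (![s, s] i) ((dpair x y : (i : Fin 2) → M.Dom (![s, s] i)) i)) =
      (dpair (f.toFun s x) (f.toFun s y) : (i : Fin 2) → N.Dom (![s, s] i)) := by
    funext i
    rcases i with ⟨_ | _ | _, hi⟩ <;> first | rfl | omega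
  show N.relMap (L.locToRel d) (dpair (f.toFun s x) (f.toFun s y))
  rw [← heq]
  exact h2

/-- Homomorphisms preserve local positive formulas. -/
lemma LHom.lpos_realize {M N : LStructure L} (f : LHom M N) {α : Type} {σ : α → L.Sorts}
    (φ : LPosForm L α σ) (v : (x : α) → M.Dom (σ x)) (h : φ.Realize M v) :
    φ.Realize N (fun x => f.toFun (σ x) (v x)) := by
  induction φ with
  | rel R ts =>
    have h2 := f.map_rel R (fun i => (ts i).realize M v) h
    have heq : (fun i => (ts i).realize N (fun x => f.toFun _ (v x))) =
        (fun i => f.toFun _ ((ts i).realize M v)) := funext fun i => f.term_realize v (ts i)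
    show N.relMap R (fun i => (ts i).realize N (fun x => f.toFun _ (v x)))
    rw [heq]
    exact h2
  | and φ ψ ihφ ihψ => exact ⟨ihφ _ h.1, ihψ _ h.2⟩
  | or φ ψ ihφ ihψ => exact h.elim (fun h => Or.inl (ihφ _ h)) (fun h => Or.inr (ihψ _ h))
  | lex s d t φ ih =>
    obtain ⟨x, hx, hφ⟩ := h
    refine ⟨f.toFun s x, ?_, ?_⟩
    · have := f.map_locRel d hx
      rwa [← f.term_realize v t] at this
    · have := ih (vcons x v) hφ
      convert this using 1
      funext o
      cases o <;> rfl
  end Helpers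
section Ultra

open Filter

variable {L : LocalLanguage} (C : LStructure L) (hCl : IsLocal C) {I : Type} (U : Ultrafilter I)

def aeSetoid (s : L.Sorts) : Setoid (I → C.Dom s) where
  r f g := ∀ᶠ i in (U : Filter I), f i = g i
  iseqv := ⟨fun _ => Eventually.of_forall (fun _ => rfl),
    fun h => h.mono (fun _ e => e.symm),
    fun h1 h2 => (h1.and h2).mono (fun _ e => e.1.trans e.2)⟩

def UDom (s : L.Sorts) : Type :=
  {q : Quotient (aeSetoid C U s) //
    ∃ (d : L.Loc s) (c : C.Dom s), ∀ᶠ i in (U : Filter I), C.locRel d (q.out i) c}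

lemma out_mk (s : L.Sorts) (f : I → C.Dom s) :
    ∀ᶠ i in (U : Filter I), (Quotient.mk (aeSetoid C U s) f).out i = f i :=
  Quotient.mk_out (s := aeSetoid C U s) f

lemma mk_eq_iff (s : L.Sorts) (f g : I → C.Dom s) :
    Quotient.mk (aeSetoid C U s) f = Quotient.mk (aeSetoid C U s) g ↔
      ∀ᶠ i in (U : Filter I), f i = g i :=
  ⟨fun h => Quotient.exact h, fun h => Quotient.sound h⟩

lemma out_eq_iff (s : L.Sorts) (q q' : Quotient (aeSetoid C U s)) :
    (∀ᶠ i in (U : Filter I), q.out i = q'.out i) ↔ q = q' := by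
  constructor
  · intro h
    rw [← Quotient.out_eq q, ← Quotient.out_eq q']
    exact Quotient.sound h
  · rintro rfl
    exact Eventually.of_forall (fun _ => rfl)

def UStr : LStructure L where
  Dom := UDom C U
  relMap := fun {n ρ} R x => ∀ᶠ i in (U : Filter I), C.relMap R (fun j => (x j).1.out i)
  constMap := fun {s} c =>
    ⟨Quotient.mk _ (fun _ => C.constMap c), L.dd0 s, C.constMap c, by
      refine (out_mk C U s (fun _ => C.constMap c)).mono (fun i hi => ?_)
      rw [hi]
      exact (hCl.dd0_eq _ _).mpr rfl⟩

lemma UStr_locRel {s : L.Sorts} (d : L.Loc s) (x y : UDom C U s) :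
    (UStr C hCl U).locRel d x y ↔
      ∀ᶠ i in (U : Filter I), C.locRel d (x.1.out i) (y.1.out i) := by
  have key : ∀ i : I,
      (fun j => (((dpair x y : (j : Fin 2) → (UStr C hCl U).Dom (![s, s] j)) j)).1.out i) =
        (dpair (x.1.out i) (y.1.out i) : (j : Fin 2) → C.Dom (![s, s] j)) := by
    intro i
    funext j
    rcases j with ⟨_ | _ | _, hj⟩ <;> first | rfl | omega
  show (∀ᶠ i in (U : Filter I), C.relMap (L.locToRel d)
      (fun j => (((dpair x y : (j : Fin 2) → (UStr C hCl U).Dom (![s, s] j)) j)).1.out i)) ↔ _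
  refine eventually_congr (Eventually.of_forall fun i => ?_)
  rw [key i]
  rfl

lemma UStr_isLocal : IsLocal (UStr C hCl U) where
  symm d a b h := by
    erw [UStr_locRel] at h ⊢
    exact h.mono fun i hi => hCl.symm _ _ _ hi
  mono d₁ d₂ hle a b h := by
    erw [UStr_locRel] at h ⊢
    exact h.mono fun i hi => hCl.mono _ _ hle _ _ hi
  comp d₁ d₂ a b c h1 h2 := by
    erw [UStr_locRel] at h1 h2 ⊢
    exact (h1.and h2).mono fun i hi => hCl.comp _ _ _ _ _ hi.1 hi.2
  boundAx c₁ c₂ := by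
    erw [UStr_locRel]
    refine ((out_mk C U _ (fun _ => C.constMap c₁)).and
      (out_mk C U _ (fun _ => C.constMap c₂))).mono fun i hi => ?_
    show C.locRel _ _ _
    rw [show ((UStr C hCl U).constMap c₁).1.out i =
        (Quotient.mk (aeSetoid C U _) (fun _ => C.constMap c₁)).out i from rfl,
      show ((UStr C hCl U).constMap c₂).1.out i =
        (Quotient.mk (aeSetoid C U _) (fun _ => C.constMap c₂)).out i from rfl, hi.1, hi.2]
    exact hCl.boundAx c₁ c₂
  total a b := by
    obtain ⟨d₁, c₁, h₁⟩ := a.2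
    obtain ⟨d₂, c₂, h₂⟩ := b.2
    obtain ⟨e, he⟩ := hCl.total c₁ c₂
    refine ⟨L.locMul d₁ (L.locMul e d₂), ?_⟩
    erw [UStr_locRel]
    refine (h₁.and h₂).mono fun i hi => ?_
    exact hCl.comp _ _ _ _ _ hi.1 (hCl.comp _ _ _ _ _ he (hCl.symm _ _ _ hi.2))
  dd0_eq a b := by
    erw [UStr_locRel]
    constructor
    · intro h
      refine Subtype.ext ?_
      rw [← out_eq_iff C U]
      exact h.mono fun i hi => (hCl.dd0_eq _ _).mp hi
    · rintro rfl
      exact Eventually.of_forall fun i => (hCl.dd0_eq _ _).mpr rfl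

lemma UStr_term_out {β : Type} {τ : β → L.Sorts} (v : (x : β) → (UStr C hCl U).Dom (τ x))
    {s : L.Sorts} (t : LTerm L β τ s) :
    ∀ᶠ i in (U : Filter I),
      (t.realize (UStr C hCl U) v).1.out i = t.realize C (fun x => (v x).1.out i) := by
  cases t with
  | var y => exact Filter.Eventually.of_forall fun i => rfl
  | const c => exact (out_mk C U _ (fun _ => C.constMap c)).mono fun i hi => hi

/-- Łoś's theorem, forward direction, for local positive formulas. -/
lemma UStr_realize {β : Type} {τ : β → L.Sorts} (φ : LPosForm L β τ)
    (v : (x : β) → (UStr C hCl U).Dom (τ x)) (h : φ.Realize (UStr C hCl U) v) :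
    ∀ᶠ i in (U : Filter I), φ.Realize C (fun x => (v x).1.out i) := by
  induction φ with
  | @rel β' τ' n ρ R ts =>
    have hterm : ∀ᶠ i in (U : Filter I), ∀ j : Fin n,
        ((ts j).realize (UStr C hCl U) v).1.out i = (ts j).realize C (fun x => (v x).1.out i) := by
      rw [eventually_all]
      exact fun j => UStr_term_out C hCl U v (ts j)
    refine (h.and hterm).mono fun i hi => ?_
    show C.relMap R _
    have : (fun j => (ts j).realize C (fun x => (v x).1.out i)) =
        (fun j => ((ts j).realize (UStr C hCl U) v).1.out i) := by
      funext j; exact (hi.2 j).symm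
    rw [this]
    exact hi.1
  | and φ ψ ihφ ihψ =>
    exact ((ihφ v h.1).and (ihψ v h.2)).mono fun i hi => hi
  | or φ ψ ihφ ihψ =>
    rcases h with h | h
    · exact (ihφ v h).mono fun i hi => Or.inl hi
    · exact (ihψ v h).mono fun i hi => Or.inr hi
  | @lex β' τ' s d t φ ih =>
    obtain ⟨x, hx, hφ⟩ := h
    erw [UStr_locRel] at hx
    have hterm := UStr_term_out C hCl U v t
    have hcons : ∀ i : I, (fun o => ((vcons x v o).1.out i)) =
        vcons (x.1.out i) (fun y => (v y).1.out i) := by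
      intro i; funext o; cases o <;> rfl
    refine ((hx.and hterm).and (ih (vcons x v) hφ)).mono fun i hi => ?_
    refine ⟨x.1.out i, ?_, ?_⟩
    · rw [← hi.1.2]; exact hi.1.1
    · rw [← hcons i]; exact hi.2

/-- Łoś's theorem, forward direction, for positive formulas. -/
lemma UStr_realize_pos {β : Type} {τ : β → L.Sorts} (φ : PosForm L β τ)
    (v : (x : β) → (UStr C hCl U).Dom (τ x)) (h : φ.Realize (UStr C hCl U) v) :
    ∀ᶠ i in (U : Filter I), φ.Realize C (fun x => (v x).1.out i) := by
  induction φ with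
  | @rel β' τ' n ρ R ts =>
    have hterm : ∀ᶠ i in (U : Filter I), ∀ j : Fin n,
        ((ts j).realize (UStr C hCl U) v).1.out i = (ts j).realize C (fun x => (v x).1.out i) := by
      rw [eventually_all]
      exact fun j => UStr_term_out C hCl U v (ts j)
    refine (h.and hterm).mono fun i hi => ?_
    show C.relMap R _
    have : (fun j => (ts j).realize C (fun x => (v x).1.out i)) =
        (fun j => ((ts j).realize (UStr C hCl U) v).1.out i) := by
      funext j; exact (hi.2 j).symm
    rw [this]
    exact hi.1
  | and φ ψ ihφ ihψ =>
    exact ((ihφ v h.1).and (ihψ v h.2)).mono fun i hi => hi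
  | or φ ψ ihφ ihψ =>
    rcases h with h | h
    · exact (ihφ v h).mono fun i hi => Or.inl hi
    · exact (ihψ v h).mono fun i hi => Or.inr hi
  | @ex β' τ' s φ ih =>
    obtain ⟨x, hφ⟩ := h
    have hcons : ∀ i : I, (fun o => ((vcons x v o).1.out i)) =
        vcons (x.1.out i) (fun y => (v y).1.out i) := by
      intro i; funext o; cases o <;> rfl
    refine (ih (vcons x v) hφ).mono fun i hi => ?_
    refine ⟨x.1.out i, ?_⟩
    rw [← hcons i]; exact hi

lemma UStr_model (T : Set (PosSentence L)) (hmod : LocalModel C T) :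
    LocalModel (UStr C hCl U) T := by
  refine ⟨UStr_isLocal C hCl U, fun φ hφ hreal => ?_⟩
  have := UStr_realize_pos C hCl U φ (fun e => e.elim) hreal
  obtain ⟨i, hi⟩ := this.exists
  refine hmod.2 φ hφ ?_
  have : (fun x : Empty => ((fun e : Empty => e.elim : (e : Empty) →
      (UStr C hCl U).Dom (emptySorts L e)) x).1.out i) = (fun e : Empty => e.elim) := by
    funext e; exact e.elim
  rwa [this] at hi

def diagHom : LHom C (UStr C hCl U) where
  toFun s x := ⟨Quotient.mk _ (fun _ => x), L.dd0 s, x, by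
    refine (out_mk C U s (fun _ => x)).mono fun i hi => ?_
    rw [hi]
    exact (hCl.dd0_eq _ _).mpr rfl⟩
  map_rel {n ρ} R t h := by
    show ∀ᶠ i in (U : Filter I), _
    have hterm : ∀ᶠ i in (U : Filter I), ∀ j : Fin n,
        (Quotient.mk (aeSetoid C U (ρ j)) (fun _ => t j)).out i = t j := by
      rw [eventually_all]
      intro j
      exact out_mk C U _ _
    refine hterm.mono fun i hi => ?_
    have heq : (fun j => ((Quotient.mk (aeSetoid C U (ρ j)) (fun _ => t j)).out i)) = t :=
      funext fun j => hi j
    show C.relMap R (fun j => ((Quotient.mk (aeSetoid C U (ρ j)) (fun _ => t j)).out i))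
    rw [heq]
    exact h
  map_const c := Subtype.ext rfl

end Ultra
section FormulaMachinery

variable {L : LocalLanguage} (C : LStructure L)

/-- Weakening of a term by one extra variable. -/
def liftO {β : Type} {τ : β → L.Sorts} {s₀ s : L.Sorts} :
    LTerm L β τ s → LTerm L (Option β) (osort s₀ τ) s
  | .var a => .var (some a)
  | .const c => .const c

lemma liftO_realize {M : LStructure L} {β : Type} {τ : β → L.Sorts} {s₀ s : L.Sorts}
    (t : LTerm L β τ s) (x : M.Dom s₀) (v : (y : β) → M.Dom (τ y)) :
    (liftO (s₀ := s₀) t).realize M (vcons x v) = t.realize M v := by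
  cases t <;> rfl

variable {β : Type} (τ : β → L.Sorts)

/-- Context extended by a list of bound variables for elements of `C`. -/
def lctx : List (Σ s : L.Sorts, C.Dom s) → Type
  | [] => β
  | _ :: E => Option (lctx E)

/-- Sort assignment for the extended context. -/
def lsrt : (E : List (Σ s : L.Sorts, C.Dom s)) → lctx C (β := β) E → L.Sorts
  | [], y => τ y
  | p :: E, y => osort p.1 (lsrt E) y

/-- Weakening of a term to the extended context. -/
def liftT {s : L.Sorts} : (E : List (Σ s : L.Sorts, C.Dom s)) →
    LTerm L β τ s → LTerm L (lctx C E) (lsrt C τ E) s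
  | [], t => t
  | _ :: E, t => liftO (liftT E t)

/-- Valuation of the extended context from witnesses and a base valuation. -/
def vOf (v : (y : β) → C.Dom (τ y)) :
    (E : List (Σ s : L.Sorts, C.Dom s)) → (w : (m : Fin E.length) → C.Dom (E.get m).1) →
      (y : lctx C E) → C.Dom (lsrt C τ E y)
  | [], _ => v
  | _ :: E, w => vcons (w ⟨0, Nat.succ_pos _⟩) (vOf v E (fun m => w m.succ))

lemma liftT_realize {s : L.Sorts} (v : (y : β) → C.Dom (τ y)) (t : LTerm L β τ s) :
    ∀ (E : List (Σ s : L.Sorts, C.Dom s)) (w : (m : Fin E.length) → C.Dom (E.get m).1),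
      (liftT C τ E t).realize C (vOf C τ v E w) = t.realize C v := by
  intro E
  induction E with
  | nil => intro w; rfl
  | cons p E ih =>
    intro w
    show (liftO (liftT C τ E t)).realize C
      (vcons (w ⟨0, Nat.succ_pos _⟩) (vOf C τ v E (fun m => w m.succ))) = _
    rw [liftO_realize]
    exact ih _

/-- The term picking out the `m`-th bound variable. -/
def vterm : (E : List (Σ s : L.Sorts, C.Dom s)) → (m : Fin E.length) →
    LTerm L (lctx C (β := β) E) (lsrt C τ E) (E.get m).1
  | p :: E, ⟨0, _⟩ => LTerm.var (none : Option (lctx C E))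
  | p :: E, ⟨m + 1, h⟩ => liftO (vterm E ⟨m, Nat.lt_of_succ_lt_succ h⟩)

lemma vterm_realize (v : (y : β) → C.Dom (τ y)) :
    ∀ (E : List (Σ s : L.Sorts, C.Dom s)) (w : (m : Fin E.length) → C.Dom (E.get m).1)
      (m : Fin E.length), (vterm C τ E m).realize C (vOf C τ v E w) = w m := by
  intro E
  induction E with
  | nil => exact fun w m => absurd m.2 (Nat.not_lt_zero _)
  | cons p E ih =>
    intro w m
    match m with
    | ⟨0, _⟩ => rfl
    | ⟨k + 1, h⟩ =>
      show (liftO (vterm C τ E ⟨k, _⟩)).realize C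
        (vcons (w ⟨0, Nat.succ_pos _⟩) (vOf C τ v E (fun m => w m.succ))) = _
      rw [liftO_realize]
      exact ih (fun m => w m.succ) ⟨k, Nat.lt_of_succ_lt_succ h⟩

variable (D : (p : Σ s : L.Sorts, C.Dom s) → L.Loc p.1) (tm : (s : L.Sorts) → LTerm L β τ s)

/-- Locally bounded existential closure of a formula over the extended context. -/
def bForm : (E : List (Σ s : L.Sorts, C.Dom s)) →
    LPosForm L (lctx C E) (lsrt C τ E) → LPosForm L β τ
  | [], φ => φ
  | p :: E, φ => bForm E (.lex p.1 (D p) (liftT C τ E (tm p.1)) φ)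

lemma bForm_realize (v : (y : β) → C.Dom (τ y)) :
    ∀ (E : List (Σ s : L.Sorts, C.Dom s)) (φ : LPosForm L (lctx C E) (lsrt C τ E)),
      (bForm C τ D tm E φ).Realize C v ↔
        ∃ w : (m : Fin E.length) → C.Dom (E.get m).1,
          (∀ m, C.locRel (D (E.get m)) (w m) ((tm (E.get m).1).realize C v)) ∧
            φ.Realize C (vOf C τ v E w) := by
  intro E
  induction E with
  | nil =>
    intro φ
    constructor
    · intro h
      exact ⟨fun m => absurd m.2 (Nat.not_lt_zero _),
        fun m => absurd m.2 (Nat.not_lt_zero _), h⟩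
    · rintro ⟨w, _, h⟩
      exact h
  | cons p E ih =>
    intro φ
    rw [show bForm C τ D tm (p :: E) φ =
      bForm C τ D tm E (.lex p.1 (D p) (liftT C τ E (tm p.1)) φ) from rfl, ih]
    constructor
    · rintro ⟨w', hb, x, hx, hφ⟩
      rw [liftT_realize] at hx
      refine ⟨fun m => match m with
        | ⟨0, _⟩ => x
        | ⟨k + 1, h⟩ => w' ⟨k, Nat.lt_of_succ_lt_succ h⟩, ?_, ?_⟩
      · intro m
        match m with
        | ⟨0, _⟩ => exact hx
        | ⟨k + 1, h⟩ => exact hb ⟨k, Nat.lt_of_succ_lt_succ h⟩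
      · exact hφ
    · rintro ⟨w, hb, hφ⟩
      refine ⟨fun m => w m.succ, fun m => hb m.succ, w ⟨0, Nat.succ_pos _⟩, ?_, hφ⟩
      rw [liftT_realize]
      exact hb ⟨0, Nat.succ_pos _⟩

end FormulaMachinery
section FragDefs

variable {L : LocalLanguage} (C : LStructure L) {β : Type} (τ : β → L.Sorts)

/-- An atomic fact of the structure `C`. -/
structure CFact {L : LocalLanguage} (C : LStructure L) : Type where
  n : ℕ
  ρ : Fin n → L.Sorts
  R : L.Rel n ρ
  t : (j : Fin n) → C.Dom (ρ j)
  holds : C.relMap R t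

open Classical in
/-- The variable term corresponding to a member of the bound-variable list. -/
def vtermMem : (E : List (Σ s : L.Sorts, C.Dom s)) → (p : Σ s : L.Sorts, C.Dom s) →
    p ∈ E → LTerm L (lctx C (β := β) E) (lsrt C τ E) p.1
  | q :: E, p, h =>
    if he : p = q then
      (congrArg Sigma.fst he).symm ▸
        (LTerm.var (none : Option (lctx C E)) :
          LTerm L (lctx C (q :: E)) (lsrt C τ (q :: E)) q.1)
    else liftO (vtermMem E p ((List.mem_cons.mp h).resolve_left he))

lemma vtermMem_realize (v : (y : β) → C.Dom (τ y)) :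
    ∀ (E : List (Σ s : L.Sorts, C.Dom s)) (p : Σ s : L.Sorts, C.Dom s) (h : p ∈ E)
      (w : (m : Fin E.length) → C.Dom (E.get m).1)
      (P : (q : Σ s : L.Sorts, C.Dom s) → C.Dom q.1 → Prop),
      (∀ m, P (E.get m) (w m)) →
        P p ((vtermMem C τ E p h).realize C (vOf C τ v E w)) := by
  intro E
  induction E with
  | nil => exact fun p h => absurd h List.not_mem_nil
  | cons q E ih =>
    intro p h w P hP
    classical
    by_cases he : p = q
    · subst he
      have hv : vtermMem C τ (p :: E) p h = (LTerm.var (none : Option (lctx C E)) :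
          LTerm L (lctx C (p :: E)) (lsrt C τ (p :: E)) p.1) := by
        unfold vtermMem; exact dif_pos rfl
      rw [hv]
      exact hP ⟨0, Nat.succ_pos _⟩
    · have hv : vtermMem C τ (q :: E) p h =
          liftO (vtermMem C τ E p ((List.mem_cons.mp h).resolve_left he)) := by
        exact dif_neg he
      rw [hv]
      show P p ((liftO (vtermMem C τ E p _)).realize C
        (vcons (w ⟨0, Nat.succ_pos _⟩) (vOf C τ v E (fun m => w m.succ))))
      rw [liftO_realize]
      exact ih p _ (fun m => w m.succ) P (fun m => hP m.succ)

/-- Conjunction of a nonempty list of formulas. -/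
def conjF {γ : Type} {g : γ → L.Sorts} : LPosForm L γ g → List (LPosForm L γ g) → LPosForm L γ g
  | φ, [] => φ
  | φ, ψ :: l => .and φ (conjF ψ l)

lemma conjF_realize {γ : Type} {g : γ → L.Sorts} (M : LStructure L)
    (v : (y : γ) → M.Dom (g y)) :
    ∀ (l : List (LPosForm L γ g)) (φ : LPosForm L γ g),
      (conjF φ l).Realize M v ↔ φ.Realize M v ∧ ∀ ψ ∈ l, ψ.Realize M v := by
  intro l
  induction l with
  | nil => exact fun φ => ⟨fun h => ⟨h, fun ψ hψ => absurd hψ List.not_mem_nil⟩, fun h => h.1⟩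
  | cons ψ l ih =>
    intro φ
    constructor
    · rintro ⟨h1, h2⟩
      rw [ih] at h2
      exact ⟨h1, fun χ hχ => by
        rcases List.mem_cons.mp hχ with rfl | hχ
        · exact h2.1
        · exact h2.2 χ hχ⟩
    · rintro ⟨h1, h2⟩
      exact ⟨h1, (ih ψ).mpr ⟨h2 ψ List.mem_cons_self, fun χ hχ =>
        h2 χ (List.mem_cons_of_mem _ hχ)⟩⟩

end FragDefs
section Fragment

open Classical

variable {L : LocalLanguage}

/-- Key combinatorial lemma: every finite fragment of the diagram of `C` can be
mapped into `C` in a way compatible with the "transfer" map `u ↦ u'`, with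
uniformly bounded images. -/
lemma fragment_exists (C : LStructure L) (hCl : IsLocal C)
    {β : Type} {τ : β → L.Sorts} (u u' : (y : β) → C.Dom (τ y))
    (htrans : ∀ φ : LPosForm L β τ, φ.Realize C u → φ.Realize C u')
    (tm : (s : L.Sorts) → LTerm L β τ s)
    (D : (p : Σ s : L.Sorts, C.Dom s) → L.Loc p.1)
    (hD : ∀ p : Σ s : L.Sorts, C.Dom s, C.locRel (D p) p.2 ((tm p.1).realize C u))
    (F : List (CFact C)) :
    ∃ h : (s : L.Sorts) → C.Dom s → C.Dom s,
      (∀ (s : L.Sorts) (t₀ : LTerm L β τ s), h s (t₀.realize C u) = t₀.realize C u') ∧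
      (∀ δ ∈ F, C.relMap δ.R (fun j => h (δ.ρ j) (δ.t j))) ∧
      (∀ (s : L.Sorts) (x : C.Dom s), C.locRel (D ⟨s, x⟩) (h s x) ((tm s).realize C u')) := by
  classical
  -- the locality atom as a formula
  have atomRel : ∀ {s : L.Sorts} (d : L.Loc s) (t₁ t₂ : LTerm L β τ s)
      (v : (y : β) → C.Dom (τ y)),
      (LPosForm.rel (L.locToRel d) (tpair t₁ t₂)).Realize C v ↔
        C.locRel d (t₁.realize C v) (t₂.realize C v) := by
    intro s d t₁ t₂ v
    show C.relMap _ _ ↔ C.relMap _ _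
    have heq : (fun j => ((tpair t₁ t₂ : (j : Fin 2) → LTerm L β τ (![s, s] j)) j).realize C v)
        = (dpair (t₁.realize C v) (t₂.realize C v) : (j : Fin 2) → C.Dom (![s, s] j)) := by
      funext j; rcases j with ⟨_ | _ | _, hj⟩ <;> first | rfl | omega
    rw [heq]
  -- coherence of transfer on base terms
  have coh : ∀ {s : L.Sorts} (t₁ t₂ : LTerm L β τ s),
      t₁.realize C u = t₂.realize C u → t₁.realize C u' = t₂.realize C u' := by
    intro s t₁ t₂ h
    have h1 : (LPosForm.rel (L.locToRel (L.dd0 s)) (tpair t₁ t₂)).Realize C u :=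
      (atomRel _ _ _ _).mpr ((hCl.dd0_eq _ _).mpr h)
    exact (hCl.dd0_eq _ _).mp ((atomRel _ _ _ _).mp (htrans _ h1))
  -- transfer of the locality bounds on base terms
  have cohD : ∀ {s : L.Sorts} (x : C.Dom s) (t₁ : LTerm L β τ s),
      t₁.realize C u = x → C.locRel (D ⟨s, x⟩) (t₁.realize C u') ((tm s).realize C u') := by
    intro s x t₁ h
    have h1 : (LPosForm.rel (L.locToRel (D ⟨s, x⟩)) (tpair t₁ (tm s))).Realize C u :=
      (atomRel _ _ _ _).mpr (by rw [h]; exact hD ⟨s, x⟩)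
    exact (atomRel _ _ _ _).mp (htrans _ h1)
  -- the core construction, given bounded witnesses for a list of bound variables
  have hcore : ∀ (E : List (Σ s : L.Sorts, C.Dom s))
      (w' : (m : Fin E.length) → C.Dom (E.get m).1),
      (∀ m, C.locRel (D (E.get m)) (w' m) ((tm (E.get m).1).realize C u')) →
      ∃ h : (s : L.Sorts) → C.Dom s → C.Dom s,
        (∀ (s : L.Sorts) (t₀ : LTerm L β τ s), h s (t₀.realize C u) = t₀.realize C u') ∧
        (∀ (s : L.Sorts) (x : C.Dom s), C.locRel (D ⟨s, x⟩) (h s x) ((tm s).realize C u')) ∧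
        (∀ p : Σ s : L.Sorts, C.Dom s,
          h p.1 p.2 = ((if hb : ∃ t : LTerm L β τ p.1, t.realize C u = p.2 then
              liftT C τ E (Classical.choose hb)
            else if hm : p ∈ E then vtermMem C τ E p hm
            else liftT C τ E (tm p.1)).realize C (vOf C τ u' E w'))) := by
    intro E w' hw'
    refine ⟨fun s x =>
      if hb : ∃ t : LTerm L β τ s, t.realize C u = x then (Classical.choose hb).realize C u'
      else if hm : (⟨s, x⟩ : Σ s : L.Sorts, C.Dom s) ∈ E then
        (vtermMem C τ E ⟨s, x⟩ hm).realize C (vOf C τ u' E w')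
      else (tm s).realize C u', ?_, ?_, ?_⟩
    · intro s t₀
      beta_reduce
      rw [dif_pos ⟨t₀, rfl⟩]
      exact coh _ _ (Classical.choose_spec (⟨t₀, rfl⟩ :
        ∃ t : LTerm L β τ s, t.realize C u = t₀.realize C u))
    · intro s x
      beta_reduce
      by_cases hb : ∃ t : LTerm L β τ s, t.realize C u = x
      · rw [dif_pos hb]
        exact cohD x _ (Classical.choose_spec hb)
      · rw [dif_neg hb]
        by_cases hm : (⟨s, x⟩ : Σ s : L.Sorts, C.Dom s) ∈ E
        · rw [dif_pos hm]
          exact vtermMem_realize C τ u' E ⟨s, x⟩ hm w'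
            (fun q val => C.locRel (D q) val ((tm q.1).realize C u')) hw'
        · rw [dif_neg hm]
          exact hCl.mono _ _ (L.dd0_locLe _) _ _ ((hCl.dd0_eq _ _).mpr rfl)
    · intro p
      beta_reduce
      by_cases hb : ∃ t : LTerm L β τ p.1, t.realize C u = p.2
      · rw [dif_pos hb, dif_pos hb, liftT_realize]
      · rw [dif_neg hb, dif_neg hb]
        by_cases hm : p ∈ E
        · rw [dif_pos hm, dif_pos hm]
        · rw [dif_neg hm, dif_neg hm, liftT_realize]
  -- now the fragment itself
  match F with
  | [] =>
    obtain ⟨h, h1, h2, _⟩ := hcore [] (fun m => absurd m.2 (Nat.not_lt_zero _))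
      (fun m => absurd m.2 (Nat.not_lt_zero _))
    exact ⟨h, h1, fun δ hδ => absurd hδ List.not_mem_nil, h2⟩
  | δ₀ :: F' =>
    set F := δ₀ :: F' with hF
    -- the elements mentioned in the fragment and the bound-variable list
    set elems : List (Σ s : L.Sorts, C.Dom s) :=
      F.flatMap (fun δ => List.ofFn (fun j => ⟨δ.ρ j, δ.t j⟩)) with helems
    set E : List (Σ s : L.Sorts, C.Dom s) :=
      elems.filter (fun p => decide (¬ ∃ t : LTerm L β τ p.1, t.realize C u = p.2)) with hE
    -- the term associated to an element
    set mkT : (p : Σ s : L.Sorts, C.Dom s) → LTerm L (lctx C E) (lsrt C τ E) p.1 :=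
      fun p =>
        if hb : ∃ t : LTerm L β τ p.1, t.realize C u = p.2 then
          liftT C τ E (Classical.choose hb)
        else if hm : p ∈ E then vtermMem C τ E p hm
        else liftT C τ E (tm p.1) with hmkT
    -- values of these terms on the `u` side with the canonical witnesses
    have hmem : ∀ p ∈ elems, ¬ (∃ t : LTerm L β τ p.1, t.realize C u = p.2) → p ∈ E := by
      intro p hp hb
      rw [hE, List.mem_filter]
      exact ⟨hp, by simpa using hb⟩
    have hmkTu : ∀ p ∈ elems,
        (mkT p).realize C (vOf C τ u E (fun m => (E.get m).2)) = p.2 := by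
      intro p hp
      rw [hmkT]
      beta_reduce
      by_cases hb : ∃ t : LTerm L β τ p.1, t.realize C u = p.2
      · rw [dif_pos hb, liftT_realize]
        exact Classical.choose_spec hb
      · rw [dif_neg hb, dif_pos (hmem p hp hb)]
        exact vtermMem_realize C τ u E p (hmem p hp hb) _ (fun q val => val = q.2)
          (fun m => rfl)
    -- the fragment as a local positive formula
    set atomOf : CFact C → LPosForm L (lctx C E) (lsrt C τ E) :=
      fun δ => .rel δ.R (fun j => mkT ⟨δ.ρ j, δ.t j⟩) with hatomOf
    have hmemel : ∀ δ ∈ F, ∀ j, (⟨δ.ρ j, δ.t j⟩ : Σ s : L.Sorts, C.Dom s) ∈ elems := by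
      intro δ hδ j
      rw [helems, List.mem_flatMap]
      exact ⟨δ, hδ, by rw [List.mem_ofFn]; exact ⟨j, rfl⟩⟩
    have hatomu : ∀ δ ∈ F, (atomOf δ).Realize C (vOf C τ u E (fun m => (E.get m).2)) := by
      intro δ hδ
      show C.relMap δ.R _
      have : (fun j => (mkT ⟨δ.ρ j, δ.t j⟩).realize C
          (vOf C τ u E (fun m => (E.get m).2))) = δ.t :=
        funext fun j => hmkTu _ (hmemel δ hδ j)
      rw [this]
      exact δ.holds
    -- realize the bounded closure on the `u` side
    have hφu : (bForm C τ D tm E (conjF (atomOf δ₀) (F'.map atomOf))).Realize C u := by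
      rw [bForm_realize]
      refine ⟨fun m => (E.get m).2, fun m => hD (E.get m), ?_⟩
      rw [conjF_realize]
      refine ⟨hatomu δ₀ List.mem_cons_self, fun ψ hψ => ?_⟩
      obtain ⟨δ, hδ, rfl⟩ := List.mem_map.mp hψ
      exact hatomu δ (List.mem_cons_of_mem _ hδ)
    -- transfer it to the `u'` side and extract witnesses
    have hφu' := htrans _ hφu
    rw [bForm_realize] at hφu'
    obtain ⟨w', hw', hconj⟩ := hφu'
    rw [conjF_realize] at hconj
    obtain ⟨h, h1, h2, h3⟩ := hcore E w' hw'
    refine ⟨h, h1, ?_, h2⟩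
    intro δ hδ
    have hval : (fun j => h (δ.ρ j) (δ.t j)) =
        (fun j => (mkT ⟨δ.ρ j, δ.t j⟩).realize C (vOf C τ u' E w')) := by
      funext j
      rw [h3 ⟨δ.ρ j, δ.t j⟩, hmkT]
    rw [hval]
    rcases List.mem_cons.mp hδ with rfl | hδ'
    · exact hconj.1
    · exact hconj.2 _ (List.mem_map.mpr ⟨δ, hδ', rfl⟩)

end Fragment
section MainLemma

open Filter

/-- From equality of local positive types over `A`, an endomorphism of `C` fixing `A`
and mapping `a` to `b`. -/
lemma exists_hom {L : LocalLanguage} (T : Set (PosSentence L)) (C : LStructure L)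
    (hC : IsRetractor T C) (A : ParamSet C) {α : Type} {σ : α → L.Sorts}
    (hpt : ∀ s : L.Sorts, s ∉ Set.range σ → Nonempty (L.Const s) ∨ (A s).Nonempty)
    (a b : (x : α) → C.Dom (σ x))
    (hab : ltpOver C A a = ltpOver C A b) :
    ∃ f : LHom C C, (∀ (s : L.Sorts) (x : C.Dom s), x ∈ A s → f.toFun s x = x) ∧
      ∀ x : α, f.toFun (σ x) (a x) = b x := by
  classical
  have hCl : IsLocal C := hC.1.1
  have htrans : ∀ φ : LPosForm L (α ⊕ Σ s : L.Sorts, A s) (Sum.elim σ (fun p => p.1)),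
      φ.Realize C (sval a (fun p => p.2.1)) → φ.Realize C (sval b (fun p => p.2.1)) := by
    intro φ h
    have h1 : φ ∈ ltpOver C A a := h
    rw [hab] at h1
    exact h1
  have htm : ∀ s : L.Sorts,
      Nonempty (LTerm L (α ⊕ Σ s : L.Sorts, A s) (Sum.elim σ (fun p => p.1)) s) := by
    intro s
    by_cases hr : s ∈ Set.range σ
    · obtain ⟨x, rfl⟩ := hr
      exact ⟨LTerm.var (Sum.inl x)⟩
    · rcases hpt s hr with hc | hp
      · exact ⟨LTerm.const hc.some⟩
      · exact ⟨LTerm.var (Sum.inr (⟨s, ⟨hp.choose, hp.choose_spec⟩⟩ : Σ s : L.Sorts, A s))⟩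
  let tm : (s : L.Sorts) → LTerm L (α ⊕ Σ s : L.Sorts, A s) (Sum.elim σ (fun p => p.1)) s :=
    fun s => (htm s).some
  have hDex : ∀ p : Σ s : L.Sorts, C.Dom s,
      ∃ d : L.Loc p.1, C.locRel d p.2 ((tm p.1).realize C (sval a (fun p => p.2.1))) :=
    fun p => hCl.total _ _
  choose D hDs using hDex
  have hfrag := fragment_exists C hCl (sval a (fun p => p.2.1)) (sval b (fun p => p.2.1))
    htrans tm D hDs
  choose H H1 H2 H3 using hfrag
  -- an ultrafilter concentrating on large fragments
  let gens : Set (Set (List (CFact C))) := {S | ∃ δ : CFact C, S = {F | δ ∈ F}}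
  have hne : (Filter.generate gens).NeBot := by
    rw [Filter.generate_neBot_iff]
    intro t hts htfin
    have key : ∀ t' : Set (Set (List (CFact C))), t'.Finite → t' ⊆ gens →
        ∃ F : List (CFact C), ∀ S ∈ t', F ∈ S := by
      intro t' ht'
      refine Set.Finite.induction_on t' ht' ?_ ?_
      · intro _
        exact ⟨[], fun S hS => absurd hS (Set.notMem_empty _)⟩
      · rintro S t'' hS ht'' ih hsub
        obtain ⟨F, hF⟩ := ih (fun x hx => hsub (Set.mem_insert_of_mem _ hx))
        obtain ⟨δ, rfl⟩ := hsub (Set.mem_insert _ _)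
        refine ⟨δ :: F, ?_⟩
        intro S' hS'
        rcases Set.mem_insert_iff.mp hS' with rfl | h'
        · exact List.mem_cons_self
        · obtain ⟨δ', hS'eq⟩ := hsub (Set.mem_insert_of_mem _ h')
          have := hF S' h'
          rw [hS'eq] at this ⊢
          exact List.mem_cons_of_mem _ this
    obtain ⟨F, hF⟩ := key t htfin hts
    exact ⟨F, fun S hS => hF S hS⟩
  haveI := hne
  obtain ⟨U, hUle⟩ : ∃ U : Ultrafilter (List (CFact C)),
      (U : Filter (List (CFact C))) ≤ Filter.generate gens :=
    ⟨Ultrafilter.of (Filter.generate gens), Ultrafilter.of_le _⟩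
  have hUmem : ∀ δ : CFact C, {F : List (CFact C) | δ ∈ F} ∈ (U : Filter (List (CFact C))) :=
    fun δ => Filter.le_def.mp hUle _ (Filter.mem_generate_of_mem ⟨δ, rfl⟩)
  -- the ultraproduct model and the two homomorphisms
  have hNmod : LocalModel (UStr C hCl U) T := UStr_model C hCl U T hC.1
  let du := diagHom C hCl U
  have hanch : ∀ (s : L.Sorts) (x : C.Dom s), ∃ (d : L.Loc s) (c : C.Dom s),
      ∀ᶠ F in (U : Filter (List (CFact C))),
        C.locRel d ((Quotient.mk (aeSetoid C U s) (fun F => H F s x)).out F) c :=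
    fun s x => ⟨D ⟨s, x⟩, (tm s).realize C (sval b (fun p => p.2.1)),
      (out_mk C U s (fun F => H F s x)).mono fun F hF => by rw [hF]; exact H3 F s x⟩
  let vh : LHom C (UStr C hCl U) := {
    toFun := fun s x => ⟨Quotient.mk _ (fun F => H F s x), hanch s x⟩
    map_rel := fun {n ρ} R t h => by
      have hδ : {F : List (CFact C) | (⟨n, ρ, R, t, h⟩ : CFact C) ∈ F} ∈
          (U : Filter (List (CFact C))) := hUmem _
      have hterm : ∀ᶠ F in (U : Filter (List (CFact C))), ∀ j : Fin n,
          (Quotient.mk (aeSetoid C U (ρ j)) (fun F => H F (ρ j) (t j))).out F =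
            H F (ρ j) (t j) := by
        rw [eventually_all]
        exact fun j => out_mk C U _ _
      show ∀ᶠ F in (U : Filter (List (CFact C))), _
      refine (hterm.and hδ).mono fun F hF => ?_
      have heq : (fun j => (Quotient.mk (aeSetoid C U (ρ j)) (fun F => H F (ρ j) (t j))).out F)
          = fun j => H F (ρ j) (t j) := funext hF.1
      show C.relMap R
        (fun j => (Quotient.mk (aeSetoid C U (ρ j)) (fun F => H F (ρ j) (t j))).out F)
      rw [heq]
      exact H2 F _ hF.2
    map_const := fun {s} c =>
      Subtype.ext (Quotient.sound (Filter.Eventually.of_forall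
        (fun F => H1 F s (LTerm.const c))))
  }
  obtain ⟨g, hg⟩ := hC.2 (UStr C hCl U) hNmod du
  refine ⟨g.comp vh, ?_, ?_⟩
  · intro s x hx
    have h1 : vh.toFun s x = du.toFun s x :=
      Subtype.ext (Quotient.sound (Filter.Eventually.of_forall
        (fun F => H1 F s (LTerm.var (Sum.inr (⟨s, ⟨x, hx⟩⟩ : Σ s : L.Sorts, A s))))))
    show g.toFun s (vh.toFun s x) = x
    rw [h1]
    exact congrArg (fun f : LHom C C => f.toFun s x) hg
  · intro x
    have h1 : vh.toFun (σ x) (a x) = du.toFun (σ x) (b x) :=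
      Subtype.ext (Quotient.sound (Filter.Eventually.of_forall
        (fun F => H1 F (σ x) (LTerm.var (Sum.inl x)))))
    show g.toFun (σ x) (vh.toFun (σ x) (a x)) = b x
    rw [h1]
    exact congrArg (fun f : LHom C C => f.toFun (σ x) (b x)) hg

end MainLemma
/-- Let `C` be a retractor of `T`, `A ⊆ C` a set of parameters and
`(α, σ)` a variable pointed over `L(A)`.  Two tuples `a, b ∈ C^x` have the same local
positive type over `A` iff some automorphism of `C` fixing `A` pointwise maps `a` to
`b`. -/
theorem same_ltp_over_iff_automorphism
    {L : LocalLanguage} (T : Set (PosSentence L))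
    (hT : IsNegLocalTheory T) (hsat : LocSat T)
    (C : LStructure L) (hC : IsRetractor T C) (A : ParamSet C)
    (α : Type) (σ : α → L.Sorts)
    (hpt : ∀ s : L.Sorts, s ∉ Set.range σ → Nonempty (L.Const s) ∨ (A s).Nonempty)
    (a b : (x : α) → C.Dom (σ x)) :
    ltpOver C A a = ltpOver C A b ↔
      ∃ f : LHom C C, f.IsAuto ∧ (∀ (s : L.Sorts) (x : C.Dom s), x ∈ A s → f.toFun s x = x) ∧
        ∀ x : α, f.toFun (σ x) (a x) = b x := by
  constructor
  · intro hab
    obtain ⟨f₁, hA1, hb1⟩ := exists_hom T C hC A hpt a b hab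
    obtain ⟨f₂, hA2, hb2⟩ := exists_hom T C hC A hpt b a hab.symm
    obtain ⟨h, hh⟩ := hC.2 C hC.1 (f₂.comp f₁)
    have hg : ∀ (s : L.Sorts) (x : C.Dom s), (h.comp f₂).toFun s (f₁.toFun s x) = x :=
      fun s x => congrArg (fun f : LHom C C => f.toFun s x) hh
    have hgf : (h.comp f₂).comp f₁ = LHom.id C :=
      LHom.ext' (funext fun s => funext fun x => hg s x)
    have he2 : (f₁.comp (h.comp f₂)).comp (f₁.comp (h.comp f₂)) = f₁.comp (h.comp f₂) :=
      LHom.ext' (funext fun s => funext fun x => by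
        show f₁.toFun s ((h.comp f₂).toFun s (f₁.toFun s ((h.comp f₂).toFun s x))) =
          f₁.toFun s ((h.comp f₂).toFun s x)
        rw [hg])
    obtain ⟨l, hl⟩ := hC.2 C hC.1 (f₁.comp (h.comp f₂))
    have he : f₁.comp (h.comp f₂) = LHom.id C := by
      refine LHom.ext' (funext fun s => funext fun x => ?_)
      have h1 : ∀ y : C.Dom s, l.toFun s ((f₁.comp (h.comp f₂)).toFun s y) = y :=
        fun y => congrArg (fun f : LHom C C => f.toFun s y) hl
      have h2 : (f₁.comp (h.comp f₂)).toFun s ((f₁.comp (h.comp f₂)).toFun s x) =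
          (f₁.comp (h.comp f₂)).toFun s x :=
        congrArg (fun f : LHom C C => f.toFun s x) he2
      have h3 := h1 ((f₁.comp (h.comp f₂)).toFun s x)
      rw [h2] at h3
      exact h3.symm.trans (h1 x)
    exact ⟨f₁, ⟨h.comp f₂, hgf, he⟩, hA1, hb1⟩
  · rintro ⟨f, ⟨g', hg'1, hg'2⟩, hfA, hfab⟩
    have hg'comp : ∀ (s : L.Sorts) (y : C.Dom s), g'.toFun s (f.toFun s y) = y :=
      fun s y => congrArg (fun k : LHom C C => k.toFun s y) hg'1
    have hg'A : ∀ (s : L.Sorts) (x : C.Dom s), x ∈ A s → g'.toFun s x = x := by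
      intro s x hx
      have h1 := hg'comp s x
      rwa [hfA s x hx] at h1
    have hg'b : ∀ x : α, g'.toFun (σ x) (b x) = a x := by
      intro x
      have h1 := hg'comp (σ x) (a x)
      rwa [hfab x] at h1
    ext φ
    constructor
    · intro hφ
      have h1 : φ.Realize C (sval a (fun p : Σ s : L.Sorts, A s => p.2.1)) := hφ
      have h2 := f.lpos_realize φ _ h1
      have hv : (fun y => f.toFun (Sum.elim σ (fun p : Σ s : L.Sorts, A s => p.1) y)
          ((sval a (fun p : Σ s : L.Sorts, A s => p.2.1)) y)) = sval b (fun p : Σ s : L.Sorts, A s => p.2.1) := by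
        funext y
        cases y with
        | inl x => exact hfab x
        | inr p => exact hfA _ _ p.2.2
      show φ.Realize C (sval b (fun p : Σ s : L.Sorts, A s => p.2.1))
      rwa [hv] at h2
    · intro hφ
      have h1 : φ.Realize C (sval b (fun p : Σ s : L.Sorts, A s => p.2.1)) := hφ
      have h2 := g'.lpos_realize φ _ h1
      have hv : (fun y => g'.toFun (Sum.elim σ (fun p : Σ s : L.Sorts, A s => p.1) y)
          ((sval b (fun p : Σ s : L.Sorts, A s => p.2.1)) y)) = sval a (fun p : Σ s : L.Sorts, A s => p.2.1) := by
        funext y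
        cases y with
        | inl x => exact hg'b x
        | inr p => exact hg'A _ _ p.2.2
      show φ.Realize C (sval a (fun p : Σ s : L.Sorts, A s => p.2.1))
      rwa [hv] at h2
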